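/- arXiv:math/9909050 — 5 statements merged into one kernel-verified Lean document; each statement's English description precedes it below -/
import Mathlib

section
/- For any finite sequence a = (a_1, ..., a_m) of integers, the iterated fraction of the concatenated sequence a ++ (0) ++ reverse(-a) equals 0, where -a negates every entry and reverse reverses the order. -/
/-- Values in ℚ ∪ {∞}, with `none` playing the role of `∞`. -/
abbrev QInf := Option ℚ

/-- Inversion on ℚ ∪ {∞}: 1/0 = ∞, 1/∞ = 0. -/
def qinv : QInf → QInf
  | none => some 0
  | some q => if q = 0 then none else some q⁻¹

/-- Addition of an integer: k + ∞ = ∞. -/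
def qadd (k : ℤ) : QInf → QInf
  | none => none
  | some q => some (q + k)

/-- Iterated fraction of the reversed sequence:
`ifracRev [aₙ, ..., a₁] = IF(a₁,...,aₙ)`. -/
def ifracRev : List ℤ → QInf
  | [] => none
  | x :: rest => qadd x (qinv (ifracRev rest))

/-- The iterated fraction `IF(a₁,...,aₙ)` with values in ℚ ∪ {∞}:
`IF(a₁) = a₁`, `IF(a₁,...,aₙ) = 1/IF(a₁,...,aₙ₋₁) + aₙ`. -/
def ifrac (l : List ℤ) : QInf := ifracRev l.reverse

lemma qinv_qinv (v : QInf) : qinv (qinv v) = v := by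
  cases v with
  | none => simp [qinv]
  | some q =>
    by_cases h : q = 0 <;> simp [qinv, h, inv_eq_zero]

lemma qadd_neg_qadd (x : ℤ) (v : QInf) : qadd (-x) (qadd x v) = v := by
  cases v <;> simp [qadd]

lemma qadd_zero (v : QInf) : qadd 0 v = v := by
  cases v <;> simp [qadd]

lemma key (l : List ℤ) : ∀ r : List ℤ,
    ifracRev (l.map Neg.neg ++ 0 :: (l.reverse ++ r)) = qinv (ifracRev r) := by
  induction l with
  | nil => intro r; simp [ifracRev, qadd_zero]
  | cons x l ih =>
    intro r
    have : (x :: l).reverse ++ r = l.reverse ++ (x :: r) := by simp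
    simp only [List.map_cons, List.cons_append, this, ifracRev, List.append_eq, ih (x :: r),
      qinv_qinv, qadd_neg_qadd]

theorem stmt_0 (a : List ℤ) :
    ifrac (a ++ [0] ++ (a.map Neg.neg).reverse) = some 0 := by
  have h : (a ++ [0] ++ (a.map Neg.neg).reverse).reverse
      = a.map Neg.neg ++ 0 :: (a.reverse ++ []) := by simp
  rw [ifrac, h, key a []]
  rfl
end

section
/- If a finite integer sequence a satisfies IF(a) = 0, then for every integer x the iterated fraction IF(a ++ (x) ++ reverse(-a)) = 0, i.e. it is independent of x and equal to 0. -/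
open Matrix

def Mm (a : ℤ) : Matrix (Fin 2) (Fin 2) ℚ := !![(a : ℚ), 1; 1, 0]
def Jm : Matrix (Fin 2) (Fin 2) ℚ := !![1, 0; 0, -1]
def Pm (l : List ℤ) : Matrix (Fin 2) (Fin 2) ℚ := (l.map Mm).prod

def mob (A : Matrix (Fin 2) (Fin 2) ℚ) : QInf :=
  if A 1 0 = 0 then none else some (A 0 0 / A 1 0)

lemma Pm_nil : Pm [] = 1 := rfl
lemma Pm_cons (y : ℤ) (l : List ℤ) : Pm (y :: l) = Mm y * Pm l := by
  simp [Pm]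
lemma Pm_append (l₁ l₂ : List ℤ) : Pm (l₁ ++ l₂) = Pm l₁ * Pm l₂ := by
  simp [Pm]
lemma Pm_singleton (y : ℤ) : Pm [y] = Mm y := by simp [Pm]

lemma det_Mm (a : ℤ) : (Mm a).det = -1 := by
  simp [Mm, Matrix.det_fin_two_of]

lemma det_Pm (l : List ℤ) : (Pm l).det = (-1) ^ l.length := by
  induction l with
  | nil => simp [Pm_nil]
  | cons y l ih => rw [Pm_cons, Matrix.det_mul, det_Mm, ih, List.length_cons, pow_succ]; ring

lemma det_Pm_ne (l : List ℤ) : (Pm l).det ≠ 0 := by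
  rw [det_Pm]; exact pow_ne_zero _ (by norm_num)

lemma ifracRev_eq_mob (l : List ℤ) : ifracRev l = mob (Pm l) := by
  induction l with
  | nil =>
    simp [ifracRev, mob, Pm_nil, Matrix.one_apply]
  | cons y l ih =>
    have hdet : (Pm l) 0 0 * Pm l 1 1 - Pm l 0 1 * Pm l 1 0 ≠ 0 := by
      have := det_Pm_ne l
      rwa [Matrix.det_fin_two] at this
    rw [ifracRev, ih, Pm_cons]
    have h00 : (Mm y * Pm l) 0 0 = y * Pm l 0 0 + Pm l 1 0 := by
      simp [Matrix.mul_apply, Fin.sum_univ_two, Mm]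
    have h10 : (Mm y * Pm l) 1 0 = Pm l 0 0 := by
      simp [Matrix.mul_apply, Fin.sum_univ_two, Mm]
    by_cases hγ : Pm l 1 0 = 0
    · have hα : Pm l 0 0 ≠ 0 := by
        intro h; apply hdet; rw [h, hγ]; ring
      simp [mob, hγ, hα, qinv, qadd, h00, h10, mul_comm]
    · by_cases hα : Pm l 0 0 = 0
      · simp [mob, hγ, hα, qinv, qadd, h00, h10, div_eq_zero_iff]
      · have : Pm l 0 0 / Pm l 1 0 ≠ 0 := div_ne_zero hα hγ
        simp [mob, hγ, hα, qinv, qadd, h00, h10, this]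
        field_simp
        ring

lemma JJ : Jm * Jm = 1 := by
  simp [Jm, Matrix.mul_fin_two]
  exact Matrix.one_fin_two.symm

lemma Mm_symm (y : ℤ) : (Mm y)ᵀ = Mm y := by
  ext i j
  fin_cases i <;> fin_cases j <;> simp [Mm]

lemma Mm_neg (y : ℤ) : Mm (-y) = -(Jm * Mm y * Jm) := by
  ext i j
  fin_cases i <;> fin_cases j <;>
    simp [Mm, Jm, Matrix.mul_apply, Fin.sum_univ_two]

lemma Pm_neg (l : List ℤ) :
    Pm (l.map Neg.neg) = ((-1 : ℚ) ^ l.length) • (Jm * (Pm l.reverse)ᵀ * Jm) := by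
  induction l with
  | nil => simp [Pm_nil, JJ]
  | cons y l ih =>
    have h1 : Pm ((y :: l).reverse) = Pm l.reverse * Mm y := by
      rw [List.reverse_cons, Pm_append, Pm_singleton]
    rw [List.map_cons, Pm_cons, ih, h1, Matrix.transpose_mul, Mm_symm]
    rw [mul_smul_comm, Mm_neg]
    have hassoc : Jm * (Mm y * (Pm l.reverse)ᵀ) * Jm
        = (Jm * Mm y * Jm) * (Jm * (Pm l.reverse)ᵀ * Jm) := by
      simp only [mul_assoc]
      rw [← mul_assoc Jm Jm ((Pm l.reverse)ᵀ * Jm), JJ, one_mul]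
    rw [hassoc, List.length_cons, neg_mul, smul_neg, pow_succ, mul_smul,
      neg_one_smul, smul_neg]

theorem stmt_1 (a : List ℤ) (ha : ifrac a = some 0) (x : ℤ) :
    ifrac (a ++ [x] ++ (a.map Neg.neg).reverse) = some 0 := by
  have h1 : (a ++ [x] ++ (a.map Neg.neg).reverse).reverse
      = a.map Neg.neg ++ x :: a.reverse := by
    simp [List.reverse_append]
  rw [ifrac, h1, ifracRev_eq_mob, Pm_append, Pm_cons, Pm_neg]
  have hm : mob (Pm a.reverse) = some 0 := by
    rw [← ifracRev_eq_mob]; exact ha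
  set A := Pm a.reverse with hA
  have hγ : A 1 0 ≠ 0 := by
    intro h; rw [mob, if_pos h] at hm; exact Option.some_ne_none _ hm.symm
  have hα : A 0 0 = 0 := by
    rw [mob, if_neg hγ] at hm
    have h2 := Option.some.inj hm
    rcases div_eq_zero_iff.mp h2 with h | h
    · exact h
    · exact absurd h hγ
  have hdet := det_Pm_ne a.reverse
  rw [Matrix.det_fin_two, ← hA] at hdet
  rw [hα, zero_mul, zero_sub] at hdet
  have hβ : A 0 1 ≠ 0 := by
    intro h; apply hdet; rw [h]; ring
  rw [smul_mul_assoc]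
  set c : ℚ := (-1) ^ a.length with hc
  have hcne : c ≠ 0 := pow_ne_zero _ (by norm_num)
  have e10 : ((Jm * Aᵀ * Jm) * (Mm x * A)) 1 0 = -(A 0 1 * A 1 0) := by
    simp [Jm, Mm, Matrix.mul_apply, Matrix.vecMul, dotProduct,
      Fin.sum_univ_two, Matrix.transpose_apply, hα]
  have e00 : ((Jm * Aᵀ * Jm) * (Mm x * A)) 0 0 = 0 := by
    simp [Jm, Mm, Matrix.mul_apply, Matrix.vecMul, dotProduct,
      Fin.sum_univ_two, Matrix.transpose_apply, hα]
  rw [mob, Matrix.smul_apply, Matrix.smul_apply, e10, e00]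
  have hne : c • (-(A 0 1 * A 1 0)) ≠ 0 := by
    simp only [smul_eq_mul]
    exact mul_ne_zero hcne (neg_ne_zero.mpr (mul_ne_zero hβ hγ))
  rw [if_neg hne]
  simp
end

section
/- Let a_1, ..., a_n be integers and define sequences w_1 = (a_1) and w_k = w_{k-1} ++ (a_k) ++ reverse(-w_{k-1}) for 2 ≤ k ≤ n. If a_i ≠ 0 for all i, then IF(w_n) ≠ 0. -/
/-- The sequences `w₁ = (a₁)`, `wₖ = wₖ₋₁ ++ (aₖ) ++ reverse (-wₖ₋₁)`. -/
def wseq (a : ℕ → ℤ) : ℕ → List ℤ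
  | 0 => []
  | k + 1 => wseq a k ++ [a (k + 1)] ++ ((wseq a k).map Neg.neg).reverse

namespace IFAux
open Matrix

def Am (x : ℤ) : Matrix (Fin 2) (Fin 2) ℤ := !![x, 1; 1, 0]

def Dm : Matrix (Fin 2) (Fin 2) ℤ := !![1, 0; 0, -1]

def mprod : List ℤ → Matrix (Fin 2) (Fin 2) ℤ
  | [] => 1
  | x :: rest => Am x * mprod rest

lemma mprod_nil : mprod [] = 1 := rfl
lemma mprod_cons (x : ℤ) (l : List ℤ) : mprod (x :: l) = Am x * mprod l := rfl

lemma mprod_append (l1 l2 : List ℤ) : mprod (l1 ++ l2) = mprod l1 * mprod l2 := by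
  induction l1 with
  | nil => simp [mprod]
  | cons x l ih => simp [mprod, ih, mul_assoc]

lemma det_Am (x : ℤ) : (Am x).det = -1 := by
  simp [Am, Matrix.det_fin_two_of]

lemma det_mprod (l : List ℤ) : (mprod l).det = (-1) ^ l.length := by
  induction l with
  | nil => simp [mprod]
  | cons x l ih => simp [mprod, Matrix.det_mul, det_Am, ih, pow_succ]

lemma Am_transpose (x : ℤ) : (Am x)ᵀ = Am x := by
  ext i j; fin_cases i <;> fin_cases j <;> rfl

lemma mprod_reverse (l : List ℤ) : mprod l.reverse = (mprod l)ᵀ := by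
  induction l with
  | nil => simp [mprod]
  | cons x l ih =>
    simp [mprod, mprod_append, ih, Matrix.transpose_mul, Am_transpose]

lemma DD : Dm * Dm = 1 := by
  ext i j; fin_cases i <;> fin_cases j <;> simp [Dm, Matrix.mul_apply, Fin.sum_univ_two]

lemma Am_neg (x : ℤ) : Am (-x) = -(Dm * Am x * Dm) := by
  ext i j; fin_cases i <;> fin_cases j <;>
    simp [Dm, Am, Matrix.mul_apply, Fin.sum_univ_two]

lemma mprod_neg (l : List ℤ) :
    mprod (l.map Neg.neg) = ((-1 : ℤ) ^ l.length) • (Dm * mprod l * Dm) := by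
  induction l with
  | nil => simp [mprod, DD]
  | cons x l ih =>
    have : mprod ((x :: l).map Neg.neg) = Am (-x) * mprod (l.map Neg.neg) := rfl
    rw [this, ih, Am_neg, Matrix.mul_smul]
    have h1 : -(Dm * Am x * Dm) * (Dm * mprod l * Dm)
        = -(Dm * (Am x * mprod l) * Dm) := by
      have : Dm * Am x * Dm * (Dm * mprod l * Dm)
          = Dm * Am x * (Dm * Dm) * mprod l * Dm := by
        simp only [mul_assoc]
      rw [neg_mul, this, DD, mul_one, mul_assoc Dm]
    rw [h1, smul_neg, ← neg_smul]
    have h2 : -((-1 : ℤ) ^ l.length) = (-1 : ℤ) ^ (x :: l).length := by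
      simp [pow_succ]
    rw [h2]
    rfl

lemma key_entry (x p q r s : ℤ) :
    (Dm * (!![p, q; r, s])ᵀ * Dm * (Am x * !![p, q; r, s])) 0 0 = x * p ^ 2 := by
  rw [show (!![p, q; r, s])ᵀ = !![p, r; q, s] from by
    ext i j; fin_cases i <;> fin_cases j <;> rfl]
  simp [Dm, Am, Matrix.mul_apply, Fin.sum_univ_two]
  ring

lemma col_ne_zero (l : List ℤ) : mprod l 0 0 ≠ 0 ∨ mprod l 1 0 ≠ 0 := by
  by_contra h
  push_neg at h
  have hd := det_mprod l
  rw [Matrix.det_fin_two, h.1, h.2] at hd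
  have : ((-1 : ℤ) ^ l.length) ≠ 0 := by positivity
  simp at hd
  exact this hd.symm

lemma entry_Am_mul (x : ℤ) (M : Matrix (Fin 2) (Fin 2) ℤ) :
    (Am x * M) 0 0 = x * M 0 0 + M 1 0 ∧ (Am x * M) 1 0 = M 0 0 := by
  constructor <;> simp [Am, Matrix.mul_apply, Fin.sum_univ_two]

lemma ifracRev_eq (l : List ℤ) :
    ifracRev l = if mprod l 1 0 = 0 then none
      else some ((mprod l 0 0 : ℚ) / (mprod l 1 0 : ℚ)) := by
  induction l with
  | nil => simp [ifracRev, mprod]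
  | cons x rest ih =>
    have hcol := col_ne_zero rest
    set M := mprod rest with hM
    have e1 : mprod (x :: rest) 0 0 = x * M 0 0 + M 1 0 := (entry_Am_mul x M).1
    have e2 : mprod (x :: rest) 1 0 = M 0 0 := (entry_Am_mul x M).2
    rw [show ifracRev (x :: rest) = qadd x (qinv (ifracRev rest)) from rfl, ih, e1, e2]
    by_cases hr : M 1 0 = 0
    · -- rest evaluates to ∞
      have hp : M 0 0 ≠ 0 := by tauto
      simp only [hr, if_true, qinv, qadd, hp, if_false, Option.some.injEq,
        Int.cast_add, Int.cast_mul, Int.cast_zero, add_zero]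
      field_simp
      ring
    · by_cases hp : M 0 0 = 0
      · simp [hr, hp, qinv, qadd, div_eq_zero_iff]
      · have h1 : ((M 0 0 : ℚ) / (M 1 0 : ℚ)) ≠ 0 := by
          apply div_ne_zero <;> exact_mod_cast (by assumption)
        simp only [hr, hp, if_false, qinv, qadd, h1, Option.some.injEq]
        rw [inv_div]
        push_cast
        field_simp
        ring

lemma w_entry (a : ℕ → ℤ) (n : ℕ) (ha : ∀ i, 1 ≤ i → i ≤ n → a i ≠ 0) :
    ∀ k, 1 ≤ k → k ≤ n → mprod ((wseq a k).reverse) 0 0 ≠ 0 := by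
  intro k
  induction k with
  | zero => omega
  | succ k ih =>
    intro _ hkn
    rcases Nat.eq_zero_or_pos k with hk0 | hk1
    · subst hk0
      have : wseq a 1 = [a 1] := by simp [wseq]
      rw [this]
      have : mprod [a 1].reverse 0 0 = a 1 := by
        simp [mprod, Am, Matrix.mul_apply, Fin.sum_univ_two]
      rw [this]
      exact ha 1 le_rfl (by omega)
    · have hprev : mprod ((wseq a k).reverse) 0 0 ≠ 0 := ih hk1 (by omega)
      set w := wseq a k with hw
      set Mk := mprod w.reverse with hMk
      have hrev : (wseq a (k + 1)).reverse
          = (w.map Neg.neg) ++ ([a (k + 1)] ++ w.reverse) := by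
        simp [wseq, List.reverse_append]
        rfl
      have hmul : mprod ((wseq a (k + 1)).reverse)
          = mprod (w.map Neg.neg) * (Am (a (k + 1)) * Mk) := by
        rw [hrev, mprod_append, mprod_append]
        simp [mprod]
        rfl
      have hneg : mprod (w.map Neg.neg)
          = ((-1 : ℤ) ^ w.length) • (Dm * Mkᵀ * Dm) := by
        rw [mprod_neg, hMk, mprod_reverse, Matrix.transpose_transpose]
      rw [hmul, hneg, Matrix.smul_mul]
      rw [Matrix.smul_apply]
      have heta : Mk = !![Mk 0 0, Mk 0 1; Mk 1 0, Mk 1 1] := by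
        exact (Matrix.etaExpand_eq Mk).symm
      have hk : (Dm * Mkᵀ * Dm * (Am (a (k + 1)) * Mk)) 0 0
          = a (k + 1) * (Mk 0 0) ^ 2 := by
        conv_lhs => rw [heta]
        exact key_entry _ _ _ _ _
      rw [hk]
      have h1 : a (k + 1) ≠ 0 := ha (k + 1) (by omega) hkn
      have h2 : ((-1 : ℤ) ^ w.length) ≠ 0 := by positivity
      simp only [smul_eq_mul]
      exact mul_ne_zero h2 (mul_ne_zero h1 (pow_ne_zero 2 hprev))

end IFAux

theorem stmt_2 (a : ℕ → ℤ) (n : ℕ) (hn : 1 ≤ n)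
    (ha : ∀ i, 1 ≤ i → i ≤ n → a i ≠ 0) :
    ifrac (wseq a n) ≠ some 0 := by
  have hp := IFAux.w_entry a n ha n hn le_rfl
  rw [ifrac, IFAux.ifracRev_eq]
  by_cases hr : IFAux.mprod ((wseq a n).reverse) 1 0 = 0
  · simp [hr]
  · simp only [hr, if_false]
    intro hcontra
    have := Option.some_injective _ hcontra
    rw [div_eq_zero_iff] at this
    rcases this with h | h
    · exact hp (by exact_mod_cast h)
    · exact hr (by exact_mod_cast h)
end

section
/- Let C be a real number with 1 < C < e^{1/(2·ln 2)}. Then for all sufficiently large integers k, C^{(ln k)^2} < 2·∑_{i=1}^{⌊k/2⌋} C^{(ln i)^2}. -/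
theorem stmt_16 (C : ℝ) (h1 : 1 < C) (h2 : C < Real.exp (1 / (2 * Real.log 2))) :
    ∀ᶠ k : ℕ in Filter.atTop,
      C ^ ((Real.log k) ^ 2)
        < 2 * ∑ i ∈ Finset.Icc 1 (k / 2), C ^ ((Real.log i) ^ 2) := by
  have hC0 : (0:ℝ) < C := lt_trans one_pos h1
  have ha : 0 < Real.log C := Real.log_pos h1
  have hlog2 : (0:ℝ) < Real.log 2 := Real.log_pos one_lt_two
  set a := Real.log C with ha_def
  have ha2 : a * Real.log 2 < 1 / 2 := by
    have h := Real.log_lt_log hC0 h2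
    rw [Real.log_exp] at h
    rw [lt_div_iff₀ (by positivity)] at h
    nlinarith
  set θ : ℝ := Real.log 2 + (1/2 - a * Real.log 2) / (2 * a) with hθ_def
  have hnum : 0 < 1/2 - a * Real.log 2 := by linarith
  have hθ2 : Real.log 2 < θ := by
    have hd := div_pos hnum (by positivity : (0:ℝ) < 2*a)
    rw [hθ_def]; linarith
  have hθ0 : 0 < θ := lt_trans hlog2 hθ2
  set s : ℝ := 2 * θ * a with hs_def
  have hs1 : s < 1 := by
    have hseq : s = 2*a*Real.log 2 + 2*a*((1/2 - a * Real.log 2) / (2 * a)) := by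
      rw [hs_def, hθ_def]; ring
    have h2a : (2:ℝ)*a ≠ 0 := by positivity
    rw [hseq, mul_div_cancel₀ _ h2a]
    linarith
  have hs0 : 0 < s := by positivity
  set c : ℝ := 1/2 - Real.exp (-θ) with hc_def
  have hexp : Real.exp (-θ) < 1/2 := by
    have h := Real.exp_lt_exp.mpr (neg_lt_neg hθ2)
    have h' : Real.exp (-Real.log 2) = 1/2 := by
      rw [Real.exp_neg, Real.exp_log two_pos]
      norm_num
    rw [h'] at h
    exact h
  have hc0 : 0 < c := by rw [hc_def]; linarith
  clear_value a θ s c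
  have E1 : ∀ᶠ k : ℕ in Filter.atTop, (k:ℝ) ^ (s-1) < c := by
    have t : Filter.Tendsto (fun x : ℝ => x ^ (s-1)) Filter.atTop (nhds 0) := by
      have := tendsto_rpow_neg_atTop (by linarith : (0:ℝ) < 1 - s)
      simpa [neg_sub] using this
    exact (t.comp tendsto_natCast_atTop_atTop).eventually_lt_const hc0
  have E2 : ∀ᶠ k : ℕ in Filter.atTop, 3 ≤ c * (k:ℝ) := by
    have t : Filter.Tendsto (fun k : ℕ => c * (k:ℝ)) Filter.atTop Filter.atTop :=
      Filter.Tendsto.const_mul_atTop hc0 tendsto_natCast_atTop_atTop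
    exact t.eventually_ge_atTop 3
  have E3 : ∀ᶠ k : ℕ in Filter.atTop, θ ≤ Real.log (k:ℝ) := by
    have t := Real.tendsto_log_atTop.comp tendsto_natCast_atTop_atTop
    exact t.eventually_ge_atTop θ
  filter_upwards [E1, E2, E3, Filter.eventually_ge_atTop 1] with k hk1 hk2 hk3 hk4
  have hk0 : (0:ℝ) < (k:ℝ) := by exact_mod_cast hk4
  set L := Real.log (k:ℝ) with hL
  set n := k / 2 with hn
  set m := Nat.floor ((k:ℝ) * Real.exp (-θ)) + 1 with hm
  have hmr : (m:ℝ) ≤ (k:ℝ) * Real.exp (-θ) + 1 := by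
    have h := Nat.floor_le (by positivity : (0:ℝ) ≤ (k:ℝ)*Real.exp (-θ))
    rw [hm]; push_cast; linarith
  have hmr' : (k:ℝ) * Real.exp (-θ) < (m:ℝ) := by
    have h := Nat.lt_floor_add_one ((k:ℝ)*Real.exp (-θ))
    rw [hm]; push_cast; linarith
  have hnr : ((k:ℝ) - 1)/2 ≤ (n:ℝ) := by
    have h : k ≤ 2 * n + 1 := by rw [hn]; omega
    have h' : (k:ℝ) ≤ 2*(n:ℝ)+1 := by exact_mod_cast h
    linarith
  have hck : c * (k:ℝ) = (k:ℝ)/2 - (k:ℝ)*Real.exp (-θ) := by rw [hc_def]; ring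
  have hmn : m ≤ n := by
    have h : (m:ℝ) ≤ (n:ℝ) := by linarith
    exact_mod_cast h
  have hcard : ((Finset.Icc m n).card : ℝ) = (n:ℝ) + 1 - (m:ℝ) := by
    rw [Nat.card_Icc]
    have h : m ≤ n + 1 := le_trans hmn (Nat.le_succ n)
    push_cast [h]
    ring
  have hcard2 : 2 * (c * (k:ℝ)) - 1 ≤ 2 * ((Finset.Icc m n).card : ℝ) := by
    rw [hcard]; linarith
  have hterm : ∀ i ∈ Finset.Icc m n, C ^ ((L - θ)^2) ≤ C ^ ((Real.log i)^2) := by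
    intro i hi
    obtain ⟨hi1, hi2⟩ := Finset.mem_Icc.mp hi
    have hi1' : (m:ℝ) ≤ (i:ℝ) := by exact_mod_cast hi1
    have hi0 : (0:ℝ) < (i:ℝ) := lt_of_lt_of_le (lt_of_le_of_lt (by positivity) hmr') hi1'
    have hlogi : L - θ ≤ Real.log i := by
      have h1' : (k:ℝ)*Real.exp (-θ) ≤ (i:ℝ) := le_trans hmr'.le hi1'
      have h2' := Real.log_le_log (by positivity) h1'
      rw [Real.log_mul (ne_of_gt hk0) (Real.exp_ne_zero _), Real.log_exp] at h2'
      linarith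
    have h0 : 0 ≤ L - θ := by linarith
    have hsq : (L-θ)^2 ≤ (Real.log i)^2 := pow_le_pow_left₀ h0 hlogi 2
    exact Real.rpow_le_rpow_of_exponent_le h1.le hsq
  have hsum : ((Finset.Icc m n).card : ℝ) * C ^ ((L-θ)^2)
      ≤ ∑ i ∈ Finset.Icc 1 n, C ^ ((Real.log i)^2) := by
    calc ((Finset.Icc m n).card : ℝ) * C ^ ((L-θ)^2)
        ≤ ∑ i ∈ Finset.Icc m n, C ^ ((Real.log i)^2) := by
          rw [← nsmul_eq_mul]
          exact Finset.card_nsmul_le_sum _ _ _ hterm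
      _ ≤ ∑ i ∈ Finset.Icc 1 n, C ^ ((Real.log i)^2) := by
          apply Finset.sum_le_sum_of_subset_of_nonneg
          · exact Finset.Icc_subset_Icc_left (by rw [hm]; omega)
          · intro i _ _
            positivity
  have hCpos : 0 < C ^ ((L-θ)^2) := Real.rpow_pos_of_pos hC0 _
  have hsplit : C ^ (L^2) = C ^ ((L-θ)^2) * C ^ (2*θ*L - θ^2) := by
    rw [← Real.rpow_add hC0]
    congr 1
    ring
  have hfac : C ^ (2*θ*L - θ^2) < c * (k:ℝ) := by
    have h1' : C ^ (2*θ*L - θ^2) ≤ C ^ (2*θ*L) :=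
      Real.rpow_le_rpow_of_exponent_le h1.le (by nlinarith [sq_nonneg θ])
    have h2' : C ^ (2*θ*L) = (k:ℝ) ^ s := by
      rw [Real.rpow_def_of_pos hC0, Real.rpow_def_of_pos hk0, hs_def, ← ha_def]
      congr 1
      ring
    have h3' : (k:ℝ) ^ s < c * (k:ℝ) := by
      have hsp : (k:ℝ) ^ s = (k:ℝ)^(s-1) * (k:ℝ) := by
        rw [← Real.rpow_add_one (ne_of_gt hk0)]
        congr 1
        ring
      rw [hsp]
      exact mul_lt_mul_of_pos_right hk1 hk0
    calc C ^ (2*θ*L-θ^2) ≤ C ^ (2*θ*L) := h1'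
      _ = (k:ℝ)^s := h2'
      _ < c * (k:ℝ) := h3'
  calc C ^ (L^2) = C ^ ((L-θ)^2) * C ^ (2*θ*L-θ^2) := hsplit
    _ < C ^ ((L-θ)^2) * (c * (k:ℝ)) := mul_lt_mul_of_pos_left hfac hCpos
    _ ≤ C ^ ((L-θ)^2) * (2*((Finset.Icc m n).card:ℝ)) := by
        apply mul_le_mul_of_nonneg_left _ hCpos.le
        linarith
    _ = 2 * (((Finset.Icc m n).card:ℝ) * C ^ ((L-θ)^2)) := by ring
    _ ≤ 2 * ∑ i ∈ Finset.Icc 1 n, C ^ ((Real.log i)^2) := by linarith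
end

section
/- Define d : ℕ → ℕ by d(1) = 2 and d(k) = 2·∑_{i=1}^{⌊k/2⌋} d(i) for k ≥ 2. Then for every real C with 1 < C < e^{1/(2·ln 2)}, one has d(k) ≥ C^{(ln k)^2} for all sufficiently large k. -/
/-- `d(1) = 2`, `d(k) = 2·∑_{i=1}^{⌊k/2⌋} d(i)` for `k ≥ 2` (and `d(0) = 0`). -/
def dd : ℕ → ℕ
  | 0 => 0
  | 1 => 2
  | k + 2 => 2 * ∑ i ∈ (Finset.Icc 1 ((k + 2) / 2)).attach, dd i.1
decreasing_by
  have h := Finset.mem_Icc.mp i.2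
  omega

lemma dd_eq {k : ℕ} (hk : 2 ≤ k) : dd k = 2 * ∑ i ∈ Finset.Icc 1 (k/2), dd i := by
  obtain ⟨j, rfl⟩ : ∃ j, k = j + 2 := ⟨k - 2, by omega⟩
  rw [dd]
  congr 1
  exact Finset.sum_attach _ _

lemma two_le_dd {k : ℕ} (hk : 1 ≤ k) : 2 ≤ dd k := by
  rcases eq_or_lt_of_le hk with rfl | h2
  · simp [dd]
  · rw [dd_eq h2]
    have h1 : (1:ℕ) ∈ Finset.Icc 1 (k/2) := by
      rw [Finset.mem_Icc]; omega
    have := Finset.single_le_sum (f := fun i => dd i) (fun i _ => Nat.zero_le _) h1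
    simp only [dd] at this
    omega

lemma dd_mono {a b : ℕ} (ha : 1 ≤ a) (hab : a ≤ b) : dd a ≤ dd b := by
  rcases eq_or_lt_of_le ha with rfl | h2
  · calc dd 1 = 2 := by simp [dd]
      _ ≤ dd b := two_le_dd (le_trans ha hab)
  · rw [dd_eq (by omega), dd_eq (by omega : 2 ≤ b)]
    have : Finset.Icc 1 (a/2) ⊆ Finset.Icc 1 (b/2) := by
      apply Finset.Icc_subset_Icc le_rfl (Nat.div_le_div_right hab)
    exact Nat.mul_le_mul_left 2 (Finset.sum_le_sum_of_subset this)

lemma dd_key {k a : ℕ} (hk : 2 ≤ k) (ha : 1 ≤ a) (ham : a ≤ k/2) :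
    2 * ((k/2 - a + 1) * dd a) ≤ dd k := by
  rw [dd_eq hk]
  apply Nat.mul_le_mul_left 2
  calc (k/2 - a + 1) * dd a = ∑ _i ∈ Finset.Icc a (k/2), dd a := by
        rw [Finset.sum_const, Nat.card_Icc, smul_eq_mul]; congr 1; omega
    _ ≤ ∑ i ∈ Finset.Icc a (k/2), dd i := by
        apply Finset.sum_le_sum
        intro i hi
        rw [Finset.mem_Icc] at hi
        exact dd_mono ha hi.1
    _ ≤ ∑ i ∈ Finset.Icc 1 (k/2), dd i := by
        apply Finset.sum_le_sum_of_subset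
        exact Finset.Icc_subset_Icc ha le_rfl

set_option maxHeartbeats 2000000 in
theorem stmt_17 (C : ℝ) (h1 : 1 < C) (h2 : C < Real.exp (1 / (2 * Real.log 2))) :
    ∀ᶠ k : ℕ in Filter.atTop, C ^ ((Real.log k) ^ 2) ≤ (dd k : ℝ) := by
  have hC0 : (0:ℝ) < C := lt_trans zero_lt_one h1
  have hlog2 : (0:ℝ) < Real.log 2 := Real.log_pos (by norm_num)
  set c : ℝ := Real.log C with hc_def
  have hc0 : 0 < c := Real.log_pos h1
  have hc1 : c < 1/(2*Real.log 2) := by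
    have := Real.log_lt_log hC0 h2
    rwa [Real.log_exp] at this
  set c' : ℝ := (c + 1/(2*Real.log 2))/2 with hc'_def
  have hc'0 : 0 < c' := by positivity
  have hcc' : c < c' := by rw [hc'_def]; linarith
  have hc'lt : c' < 1/(2*Real.log 2) := by rw [hc'_def]; linarith
  have h2c' : 2*c'*Real.log 2 < 1 := by
    have h := (lt_div_iff₀ (by positivity : (0:ℝ) < 2*Real.log 2)).mp hc'lt
    linarith
  set ε : ℝ := 1 - 2*c'*Real.log 2 with hε_def
  have hε : 0 < ε := by rw [hε_def]; linarith
  set δ : ℝ := ε/(4*c') with hδ_def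
  have hδ : 0 < δ := by positivity
  set N : ℕ := ⌈1/δ⌉₊ + 2 with hN_def
  have hN2 : 2 ≤ N := by omega
  have hNR : (2:ℝ) ≤ (N:ℝ) := by exact_mod_cast hN2
  have hN1R : (1:ℝ) ≤ (N:ℝ) - 1 := by linarith
  have hNδ : 1/((N:ℝ)-1) ≤ δ := by
    have h1d : 1/δ ≤ (⌈1/δ⌉₊ : ℝ) := Nat.le_ceil _
    have hNge : 1/δ ≤ (N:ℝ) - 1 := by
      have : ((⌈1/δ⌉₊ : ℕ):ℝ) ≤ (N:ℝ) - 1 := by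
        rw [hN_def]; push_cast; linarith
      linarith
    rw [div_le_iff₀ (by linarith : (0:ℝ) < (N:ℝ)-1)]
    rw [div_le_iff₀ hδ] at hNge
    linarith [mul_comm δ ((N:ℝ)-1)]
  set θ : ℝ := 2*c'*Real.log (2*N/((N:ℝ)-1)) with hθ_def
  have hratpos : (0:ℝ) < (N:ℝ)/((N:ℝ)-1) := by positivity
  have hrat2pos : (0:ℝ) < 2*N/((N:ℝ)-1) := by positivity
  have hθ1 : θ ≤ 1 - ε/2 := by
    have hsplit : Real.log (2*N/((N:ℝ)-1)) = Real.log 2 + Real.log ((N:ℝ)/((N:ℝ)-1)) := by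
      rw [← Real.log_mul (by norm_num) (ne_of_gt hratpos)]
      congr 1
      field_simp
    have hlog1 : Real.log ((N:ℝ)/((N:ℝ)-1)) ≤ 1/((N:ℝ)-1) := by
      have := Real.log_le_sub_one_of_pos hratpos
      have heq : (N:ℝ)/((N:ℝ)-1) - 1 = 1/((N:ℝ)-1) := by
        field_simp
        ring
      linarith
    have hle : Real.log (2*N/((N:ℝ)-1)) ≤ Real.log 2 + δ := by
      rw [hsplit]; linarith
    have h2' : θ ≤ 2*c'*(Real.log 2 + δ) := by
      rw [hθ_def]
      exact mul_le_mul_of_nonneg_left hle (by positivity)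
    have h3 : 2*c'*δ = ε/2 := by
      rw [hδ_def]; field_simp; ring
    nlinarith
  -- eventual arithmetic condition
  have hev : ∀ᶠ k : ℕ in Filter.atTop,
      θ * Real.log k + 4*c'*Real.log k/(k:ℝ) + Real.log (2*N) ≤ Real.log k ∧ 4*N ≤ k := by
    have hlt : ∀ᶠ x : ℝ in Filter.atTop, 4*c'*Real.log x ≤ x := by
      have h := Real.isLittleO_log_id_atTop.def (c := 1/(4*c')) (by positivity)
      filter_upwards [h, Filter.eventually_ge_atTop (1:ℝ)] with x hx hx1
      simp only [id] at hx
      rw [Real.norm_eq_abs, Real.norm_eq_abs, abs_of_nonneg (Real.log_nonneg hx1),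
        abs_of_nonneg (by linarith)] at hx
      calc 4*c'*Real.log x = (4*c') * Real.log x := by ring
        _ ≤ (4*c') * ((1/(4*c'))*x) := by
            apply mul_le_mul_of_nonneg_left hx (by positivity)
        _ = x := by field_simp
    have hlt' : ∀ᶠ k : ℕ in Filter.atTop, 4*c'*Real.log k/(k:ℝ) ≤ 1 := by
      filter_upwards [tendsto_natCast_atTop_atTop.eventually hlt,
        Filter.eventually_ge_atTop 1] with k hk hk1
      have hk0 : (0:ℝ) < k := by exact_mod_cast hk1
      rw [div_le_one hk0]
      exact hk
    have hbig : ∀ᶠ k : ℕ in Filter.atTop, Real.log (2*N) + 1 ≤ (ε/2) * Real.log k := by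
      have h2' : Filter.Tendsto (fun k : ℕ => (ε/2) * Real.log k) Filter.atTop Filter.atTop := by
        apply Filter.Tendsto.const_mul_atTop (by positivity)
        exact Real.tendsto_log_atTop.comp tendsto_natCast_atTop_atTop
      exact h2'.eventually_ge_atTop _
    filter_upwards [hlt', hbig, Filter.eventually_ge_atTop (4*N),
      Filter.eventually_ge_atTop 1] with k hu1 hu2 hu3 hu4
    refine ⟨?_, hu3⟩
    have hL0 : 0 ≤ Real.log k := Real.log_nonneg (by exact_mod_cast hu4)
    nlinarith [mul_le_mul_of_nonneg_right hθ1 hL0]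
  obtain ⟨K, hK⟩ := Filter.eventually_atTop.mp hev
  -- the constant A
  set K' : ℕ := max K 2 with hK'_def
  have hK'K : K ≤ K' := le_max_left _ _
  have hK'2 : 2 ≤ K' := le_max_right _ _
  set A : ℝ := 2*Real.exp (-(c'*(Real.log K')^2)) with hA_def
  have hA0 : 0 < A := by positivity
  -- main claim by strong induction
  have claim : ∀ k : ℕ, 1 ≤ k → A * Real.exp (c'*(Real.log k)^2) ≤ (dd k : ℝ) := by
    intro k
    induction k using Nat.strong_induction_on with
    | _ k IH =>
      intro hk1
      by_cases hsmall : k < K'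
      · -- base case
        have hlogk : Real.log k ≤ Real.log K' := by
          apply Real.log_le_log (by exact_mod_cast hk1)
          exact_mod_cast Nat.le_of_lt hsmall
        have hlogk0 : 0 ≤ Real.log k := Real.log_nonneg (by exact_mod_cast hk1)
        have hb : A * Real.exp (c'*(Real.log k)^2) ≤ 2 := by
          rw [hA_def, mul_assoc, ← Real.exp_add]
          have harg : -(c'*(Real.log K')^2) + c'*(Real.log k)^2 ≤ 0 := by
            nlinarith [mul_nonneg (sub_nonneg.mpr hlogk)
              (by linarith : (0:ℝ) ≤ Real.log K' + Real.log k), hc'0.le]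
          calc 2 * Real.exp (-(c'*(Real.log K')^2) + c'*(Real.log k)^2)
              ≤ 2 * Real.exp 0 := by
                apply mul_le_mul_of_nonneg_left (Real.exp_le_exp.mpr harg) (by norm_num)
            _ = 2 := by simp
        calc A * Real.exp (c'*(Real.log k)^2) ≤ 2 := hb
          _ ≤ (dd k : ℝ) := by exact_mod_cast two_le_dd hk1
      · -- inductive step
        push_neg at hsmall
        obtain ⟨hcond, hk4N⟩ := hK k (le_trans hK'K hsmall)
        set m : ℕ := k/2 with hm_def
        obtain ⟨u, hu_def⟩ : ∃ u, m/N = u := ⟨_, rfl⟩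
        obtain ⟨a, ha_def⟩ : ∃ a, m - u = a := ⟨_, rfl⟩
        have hmN : 2*N ≤ m := by omega
        have hum2 : 2*u ≤ m := by
          calc 2*u = u*2 := by ring
            _ ≤ u*N := Nat.mul_le_mul_left u hN2
            _ ≤ m := by rw [← hu_def]; exact Nat.div_mul_le_self m N
        have ha1 : 1 ≤ a := by omega
        have ham : a ≤ m := by omega
        have hak : a < k := by omega
        have hk2 : 2 ≤ k := by omega
        -- nat key inequality
        have hkey : 2 * ((u + 1) * dd a) ≤ dd k := by
          have hh := dd_key hk2 ha1 (show a ≤ k/2 by omega)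
          have heq : k/2 - a + 1 = u + 1 := by omega
          rwa [heq] at hh
        -- IH at a
        have hIH : A * Real.exp (c'*(Real.log a)^2) ≤ (dd a : ℝ) := IH a hak ha1
        -- real cast facts
        have hkR2 : (2:ℝ) ≤ (k:ℝ) := by exact_mod_cast hk2
        have haR : (1:ℝ) ≤ (a:ℝ) := by exact_mod_cast ha1
        have hakR : (a:ℝ) ≤ (k:ℝ) := by exact_mod_cast Nat.le_of_lt hak
        have hcast_a : (a:ℝ) = (m:ℝ) - (u:ℝ) := by
          rw [← ha_def, Nat.cast_sub (by omega : u ≤ m)]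
        have hmR : ((k:ℝ)-1)/2 ≤ (m:ℝ) := by
          have hh : k ≤ 2*m + 1 := by omega
          have := (Nat.cast_le (α := ℝ)).mpr hh
          push_cast at this
          linarith
        have huR : (u:ℝ) ≤ (m:ℝ)/(N:ℝ) := by
          have hh : u * N ≤ m := by rw [← hu_def]; exact Nat.div_mul_le_self m N
          have hcast : ((u*N : ℕ):ℝ) ≤ ((m:ℕ):ℝ) := Nat.cast_le.mpr hh
          rw [Nat.cast_mul] at hcast
          rw [le_div_iff₀ (by linarith : (0:ℝ) < (N:ℝ))]
          linarith
        have hu1R : (m:ℝ)/(N:ℝ) < (u:ℝ) + 1 := by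
          have h1' : N * u + m % N = m := by rw [← hu_def]; exact Nat.div_add_mod m N
          have h2' : m % N < N := Nat.mod_lt m (by omega)
          have hc1 : ((N:ℝ) * u + ((m % N : ℕ):ℝ)) = (m:ℝ) := by exact_mod_cast h1'
          have hc2 : ((m % N : ℕ):ℝ) < (N:ℝ) := by exact_mod_cast h2'
          rw [div_lt_iff₀ (by linarith : (0:ℝ) < (N:ℝ))]
          nlinarith
        -- lower bound on a
        have ha_low : ((k:ℝ)-1)/2 * (1 - 1/(N:ℝ)) ≤ (a:ℝ) := by
          rw [hcast_a]
          have h1N : (0:ℝ) < 1 - 1/(N:ℝ) := by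
            rw [sub_pos, div_lt_one (by linarith)]; linarith
          have hmu : (m:ℝ) * (1 - 1/(N:ℝ)) ≤ (m:ℝ) - (u:ℝ) := by
            have heq : (m:ℝ) * (1 - 1/(N:ℝ)) = (m:ℝ) - (m:ℝ)/(N:ℝ) := by
              field_simp
            rw [heq]; linarith
          nlinarith [mul_nonneg (sub_nonneg.mpr hmR) h1N.le]
        -- count lower bound
        have hcount : (k:ℝ) ≤ 4*(N:ℝ)*((u:ℝ)+1) := by
          have hmn : (m:ℝ) < (N:ℝ)*((u:ℝ)+1) := by
            rw [div_lt_iff₀ (by linarith : (0:ℝ) < (N:ℝ))] at hu1R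
            linarith [mul_comm ((u:ℝ)+1) (N:ℝ)]
          nlinarith
        -- log estimates
        have hloga0 : 0 ≤ Real.log a := Real.log_nonneg haR
        have hlogk0 : 0 ≤ Real.log k := Real.log_nonneg (by linarith)
        have hlogak : Real.log a ≤ Real.log k :=
          Real.log_le_log (by linarith) hakR
        have hk1R : (0:ℝ) < (k:ℝ) - 1 := by linarith
        have hgap : Real.log k - Real.log a ≤ Real.log (2*N/((N:ℝ)-1)) + 2/(k:ℝ) := by
          have hlowpos : (0:ℝ) < ((k:ℝ)-1)/2 * (1 - 1/(N:ℝ)) := by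
            have h1N : (0:ℝ) < 1 - 1/(N:ℝ) := by
              rw [sub_pos, div_lt_one (by linarith)]; linarith
            positivity
          have h1' : Real.log (((k:ℝ)-1)/2 * (1-1/(N:ℝ))) ≤ Real.log a :=
            Real.log_le_log hlowpos ha_low
          have heq : ((k:ℝ)-1)/2 * (1-1/(N:ℝ)) = ((k:ℝ)-1) / (2*N/((N:ℝ)-1)) := by
            rw [eq_div_iff (ne_of_gt hrat2pos)]
            field_simp
            try ring
          have h2' : Real.log (((k:ℝ)-1)/2 * (1-1/(N:ℝ)))
              = Real.log ((k:ℝ)-1) - Real.log (2*N/((N:ℝ)-1)) := by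
            rw [heq, Real.log_div (ne_of_gt hk1R) (ne_of_gt hrat2pos)]
          have h3' : Real.log k - Real.log ((k:ℝ)-1) ≤ 2/(k:ℝ) := by
            have hq : (0:ℝ) < (k:ℝ)/((k:ℝ)-1) := by positivity
            have hle := Real.log_le_sub_one_of_pos hq
            have heq2 : (k:ℝ)/((k:ℝ)-1) - 1 = 1/((k:ℝ)-1) := by
              field_simp
              ring
            have hlogq : Real.log ((k:ℝ)/((k:ℝ)-1))
                = Real.log k - Real.log ((k:ℝ)-1) := by
              rw [Real.log_div (by linarith : (k:ℝ) ≠ 0) (ne_of_gt hk1R)]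
            have hfr : 1/((k:ℝ)-1) ≤ 2/(k:ℝ) := by
              rw [div_le_div_iff₀ hk1R (by linarith : (0:ℝ) < (k:ℝ))]
              linarith
            rw [hlogq] at hle
            linarith [heq2 ▸ hle]
          linarith
        -- main exponent inequality
        have hgap0 : 0 ≤ Real.log (2*N/((N:ℝ)-1)) + 2/(k:ℝ) := by
          have : (1:ℝ) ≤ 2*N/((N:ℝ)-1) := by
            rw [le_div_iff₀ (by linarith : (0:ℝ) < (N:ℝ)-1)]
            linarith
          have := Real.log_nonneg this
          positivity
        have hexp : c'*(Real.log k)^2 ≤ Real.log (2*((u:ℝ)+1)) + c'*(Real.log a)^2 := by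
          have hlogcount : Real.log k - Real.log (2*(N:ℝ)) ≤ Real.log (2*((u:ℝ)+1)) := by
            have hfrac : (k:ℝ)/(2*(N:ℝ)) ≤ 2*((u:ℝ)+1) := by
              rw [div_le_iff₀ (by linarith : (0:ℝ) < 2*(N:ℝ))]
              nlinarith
            calc Real.log k - Real.log (2*(N:ℝ))
                = Real.log ((k:ℝ)/(2*(N:ℝ))) := by
                  rw [Real.log_div (by linarith : (k:ℝ) ≠ 0)
                    (by positivity : (2:ℝ)*(N:ℝ) ≠ 0)]
              _ ≤ Real.log (2*((u:ℝ)+1)) := Real.log_le_log (by positivity) hfrac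
          have hdiff : c'*((Real.log k)^2 - (Real.log a)^2)
              ≤ θ*Real.log k + 4*c'*Real.log k/(k:ℝ) := by
            have hexpand : (Real.log k)^2 - (Real.log a)^2
                = (Real.log k + Real.log a)*(Real.log k - Real.log a) := by ring
            have hsum : Real.log k + Real.log a ≤ 2*Real.log k := by linarith
            have hprod : (Real.log k + Real.log a)*(Real.log k - Real.log a)
                ≤ (2*Real.log k)*(Real.log (2*N/((N:ℝ)-1)) + 2/(k:ℝ)) := by
              apply mul_le_mul hsum hgap (by linarith) (by linarith)
            have hθexp : c'*((2*Real.log k)*(Real.log (2*N/((N:ℝ)-1)) + 2/(k:ℝ)))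
                = θ*Real.log k + 4*c'*Real.log k/(k:ℝ) := by
              rw [hθ_def]; field_simp; ring
            calc c'*((Real.log k)^2 - (Real.log a)^2)
                = c'*((Real.log k + Real.log a)*(Real.log k - Real.log a)) := by
                  rw [hexpand]
              _ ≤ c'*((2*Real.log k)*(Real.log (2*N/((N:ℝ)-1)) + 2/(k:ℝ))) := by
                  exact mul_le_mul_of_nonneg_left hprod (le_of_lt hc'0)
              _ = θ*Real.log k + 4*c'*Real.log k/(k:ℝ) := hθexp
          have hlog2N : Real.log (2*(N:ℝ)) = Real.log (2*(N:ℕ):ℝ) := by push_cast; ring_nf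
          have hcond' : θ * Real.log k + 4*c'*Real.log k/(k:ℝ) + Real.log (2*(N:ℝ)) ≤ Real.log k := by
            have : ((2*N : ℕ):ℝ) = 2*(N:ℝ) := by push_cast; ring
            rw [← this]
            exact_mod_cast hcond
          linarith
        -- conclude step
        have hupos : (0:ℝ) < 2*((u:ℝ)+1) := by positivity
        have hfin : Real.exp (c'*(Real.log k)^2)
            ≤ 2*((u:ℝ)+1) * Real.exp (c'*(Real.log a)^2) := by
          calc Real.exp (c'*(Real.log k)^2)
              ≤ Real.exp (Real.log (2*((u:ℝ)+1)) + c'*(Real.log a)^2) :=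
                Real.exp_le_exp.mpr hexp
            _ = 2*((u:ℝ)+1) * Real.exp (c'*(Real.log a)^2) := by
                rw [Real.exp_add, Real.exp_log hupos]
        have hkeyR : 2*((u:ℝ)+1) * (dd a : ℝ) ≤ (dd k : ℝ) := by
          have := (Nat.cast_le (α := ℝ)).mpr hkey
          push_cast at this
          linarith
        calc A * Real.exp (c'*(Real.log k)^2)
            ≤ A * (2*((u:ℝ)+1) * Real.exp (c'*(Real.log a)^2)) :=
              mul_le_mul_of_nonneg_left hfin (le_of_lt hA0)
          _ = 2*((u:ℝ)+1) * (A * Real.exp (c'*(Real.log a)^2)) := by ring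
          _ ≤ 2*((u:ℝ)+1) * (dd a : ℝ) :=
              mul_le_mul_of_nonneg_left hIH (le_of_lt hupos)
          _ ≤ (dd k : ℝ) := hkeyR
  -- conclude
  have hX : Filter.Tendsto (fun k:ℕ => (c'-c)*(Real.log k)^2) Filter.atTop Filter.atTop := by
    apply Filter.Tendsto.const_mul_atTop (by linarith : (0:ℝ) < c'-c)
    have hlog : Filter.Tendsto (fun k:ℕ => Real.log k) Filter.atTop Filter.atTop :=
      Real.tendsto_log_atTop.comp tendsto_natCast_atTop_atTop
    have := hlog.atTop_mul_atTop₀ hlog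
    apply this.congr
    intro k
    ring
  filter_upwards [hX.eventually_ge_atTop (-Real.log A), Filter.eventually_ge_atTop 1]
    with k hkA hk1
  have hclaim := claim k hk1
  rw [Real.rpow_def_of_pos hC0]
  calc Real.exp (Real.log C * (Real.log k)^2)
      ≤ A * Real.exp (c'*(Real.log k)^2) := by
        have harg : Real.log C * (Real.log k)^2 ≤ Real.log A + c'*(Real.log k)^2 := by
          rw [← hc_def]; linarith
        have := Real.exp_le_exp.mpr harg
        rwa [Real.exp_add, Real.exp_log hA0] at this
    _ ≤ (dd k : ℝ) := hclaim
end
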